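/- arXiv:1908.02384 — 2 statements merged into one kernel-verified Lean document; each statement's English description precedes it below -/
import Mathlib

section
/- For every integer m ≥ 1, the polynomial P(2^{2m}−1)(x) is congruent to 1 + 2·S^o_{m−1}(x) modulo 4, i.e. every coefficient of P(2^{2m}−1)(x) − (1 + 2·S^o_{m−1}(x)) is divisible by 4. -/
open Polynomial

/-- The Thue–Morse ±1 sequence: t 0 = 1, t (2n) = t n, t (2n+1) = -t n. -/
def tmSeq : ℕ → ℤ
  | 0 => 1
  | n + 1 => if (n + 1) % 2 = 0 then tmSeq ((n + 1) / 2) else -tmSeq ((n + 1) / 2)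
decreasing_by all_goals exact Nat.div_lt_self (Nat.succ_pos n) one_lt_two

/-- Numerators of the convergents of the Thue–Morse continued fraction. -/
noncomputable def Ptm : ℕ → ℤ[X]
  | 0 => 1
  | 1 => 1
  | n + 2 => Ptm (n + 1) + C (tmSeq (n + 2)) * X * Ptm n

/-- Denominators of the convergents of the Thue–Morse continued fraction. -/
noncomputable def Qtm : ℕ → ℤ[X]
  | 0 => 1
  | 1 => 1 - X
  | n + 2 => Qtm (n + 1) + C (tmSeq (n + 2)) * X * Qtm n

/-- S_m(x) = Σ_{j<m} x^(2^j). -/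
noncomputable def Spoly (m : ℕ) : ℤ[X] := ∑ j ∈ Finset.range m, X ^ (2 ^ j)
/-- S^e_m(x) = Σ_{j<m} x^(2^(2j)). -/
noncomputable def SePoly (m : ℕ) : ℤ[X] := ∑ j ∈ Finset.range m, X ^ (2 ^ (2 * j))
/-- S^o_m(x) = Σ_{j<m} x^(2^(2j+1)). -/
noncomputable def SoPoly (m : ℕ) : ℤ[X] := ∑ j ∈ Finset.range m, X ^ (2 ^ (2 * j + 1))

/-!
The recurrence is a product of transfer matrices `!![1, t(i)·X; 1, 0]`. Since `t(N + j) = -t(j)`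
for `j < N = 2^k`, the product over `[N, 2N)` is the product over `[0, N)` with `X` replaced by
`-X`, which gives the doubling identity `W(2N-2) = W(N-2)(-X) · !![0, -X; 1, 0] · W(N-2)` for the
convergent matrix `W(n) = !![P(n+1), Q(n+1); P(n), Q(n)]`.

Modulo 4, `2·f(-X) = 2·f(X)`, so `f(-X) = f(X)` whenever `f ≡ 1 (mod 2)`. With this the
doubling map preserves an explicit shape of `W(2^(l+1) - 2)` modulo 4, in which
`P(2^(l+1) - 1) = 1 + 2·aₗ`. Modulo 2, `a₁ = 0` and `aₗ₊₂ = aₗ + X^(2^l)` for `l ≥ 1`,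
so `a₂ₘ₊₁ = S^o_m`.
-/

lemma tmSeq_two_mul (n : ℕ) : tmSeq (2 * n) = tmSeq n := by
  rcases n with _ | n
  · rfl
  · rw [show 2 * (n + 1) = 2 * n + 1 + 1 by ring, tmSeq]
    simp [show (2 * n + 1 + 1) % 2 = 0 by omega, show (2 * n + 1 + 1) / 2 = n + 1 by omega]

lemma tmSeq_two_mul_add_one (n : ℕ) : tmSeq (2 * n + 1) = -tmSeq n := by
  rw [tmSeq]
  simp [show (2 * n + 1) / 2 = n by omega]

lemma tmSeq_two_pow_add {n j : ℕ} (hj : j < 2 ^ n) : tmSeq (2 ^ n + j) = -tmSeq j := by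
  induction n generalizing j with
  | zero =>
    obtain rfl : j = 0 := by simpa using hj
    exact tmSeq_two_mul_add_one 0
  | succ n ih =>
    obtain ⟨i, rfl | rfl⟩ := Nat.even_or_odd' j
    · rw [pow_succ', ← mul_add, tmSeq_two_mul, tmSeq_two_mul, ih (by omega)]
    · rw [pow_succ', ← add_assoc, ← mul_add, tmSeq_two_mul_add_one, tmSeq_two_mul_add_one,
        ih (by omega)]

noncomputable def tmStep (i : ℕ) : Matrix (Fin 2) (Fin 2) ℤ[X] := !![1, C (tmSeq i) * X; 1, 0]

noncomputable def tmTransfer (s : ℕ) : ℕ → Matrix (Fin 2) (Fin 2) ℤ[X]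
  | 0 => 1
  | l + 1 => tmStep (s + l) * tmTransfer s l

lemma tmTransfer_add (s l₁ l₂ : ℕ) :
    tmTransfer s (l₁ + l₂) = tmTransfer (s + l₁) l₂ * tmTransfer s l₁ := by
  induction l₂ with
  | zero => simp [tmTransfer]
  | succ l₂ ih => rw [← add_assoc, tmTransfer, tmTransfer, ih, add_assoc, mul_assoc]

lemma tmStep_of_neg {i i' : ℕ} (h : tmSeq i' = -tmSeq i) :
    tmStep i' = (compRingHom (-X)).mapMatrix (tmStep i) := by
  ext a b
  fin_cases a <;> fin_cases b <;> simp [tmStep, h]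

lemma tmTransfer_of_neg {s s' l : ℕ} (h : ∀ j < l, tmSeq (s' + j) = -tmSeq (s + j)) :
    tmTransfer s' l = (compRingHom (-X)).mapMatrix (tmTransfer s l) := by
  induction l with
  | zero => simp [tmTransfer]
  | succ l ih =>
    rw [tmTransfer, tmTransfer, map_mul, tmStep_of_neg (h l l.lt_succ_self),
      ih fun j hj => h j (hj.trans l.lt_succ_self)]

noncomputable def tmConv (n : ℕ) : Matrix (Fin 2) (Fin 2) ℤ[X] :=
  !![Ptm (n + 1), Qtm (n + 1); Ptm n, Qtm n]

lemma tmConv_succ (n : ℕ) : tmConv (n + 1) = tmStep (n + 2) * tmConv n := by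
  rw [tmConv, tmConv, tmStep, Matrix.mul_fin_two, Ptm, Qtm]
  ext i j
  fin_cases i <;> fin_cases j <;> simp [mul_comm]

/-- `!![1, 1; 0, 1]` is `W(-1)`: the recurrence runs backwards to `P(-1) = 0`, `Q(-1) = 1`. -/
lemma tmConv_eq_tmTransfer (n : ℕ) : tmConv n = tmTransfer 1 (n + 1) * !![1, 1; 0, 1] := by
  induction n with
  | zero =>
    simp [tmConv, tmTransfer, tmStep, tmSeq, Ptm, Qtm, sub_eq_add_neg]
  | succ n ih =>
    conv_rhs => rw [tmTransfer, show 1 + (n + 1) = n + 2 by ring]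
    rw [tmConv_succ, ih, mul_assoc]

lemma tmConv_two_mul_add_two {N : ℕ} (h : ∀ j < N + 2, tmSeq (N + 2 + j) = -tmSeq j) :
    tmConv (2 * N + 2) =
      (compRingHom (-X)).mapMatrix (tmConv N) * !![0, -X; 1, 0] * tmConv N := by
  have hlow : tmTransfer 0 (N + 2) = tmConv N * !![0, X; 1, 0] := by
    have hstep : tmTransfer 0 1 = !![1, 1; 0, 1] * !![0, X; 1, 0] := by
      simp [tmTransfer, tmStep, tmSeq]
    rw [show N + 2 = 1 + (N + 1) by ring, tmTransfer_add, hstep, tmConv_eq_tmTransfer, mul_assoc]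
  have hhigh : tmTransfer (N + 2) (N + 2) = (compRingHom (-X)).mapMatrix (tmTransfer 0 (N + 2)) :=
    tmTransfer_of_neg (by simpa using h)
  have hJ : (compRingHom (-X)).mapMatrix !![0, X; 1, 0] = !![0, -X; 1, (0 : ℤ[X])] := by
    ext i j
    fin_cases i <;> fin_cases j <;> simp
  calc tmConv (2 * N + 2) = tmTransfer (N + 2) (N + 2) * tmConv N := by
        rw [tmConv_eq_tmTransfer, show 2 * N + 2 + 1 = (N + 1) + (N + 2) by ring, tmTransfer_add,
          show 1 + (N + 1) = N + 2 by ring, tmConv_eq_tmTransfer, mul_assoc]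
    _ = _ := by rw [hhigh, hlow, map_mul, hJ]

lemma four_eq_zero : (4 : Polynomial (ZMod 4)) = 0 := CharP.ofNat_eq_zero _ 4

lemma two_mul_comp_neg_X (f : Polynomial (ZMod 4)) : 2 * f.comp (-X) = 2 * f := by
  obtain ⟨g, hg⟩ : -X - X ∣ f.comp (-X) - f := by
    simpa [eval_map, Polynomial.comp] using sub_dvd_eval_sub (-X) X (f.map C)
  linear_combination 2 * hg + (-X * g) * four_eq_zero

lemma one_add_two_mul_comp_neg_X (a : Polynomial (ZMod 4)) :
    (1 + 2 * a).comp (-X) = 1 + 2 * a := by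
  simp [two_mul_comp_neg_X]

/-- The shape of `W(2^(l+1) - 2)` modulo 4. In `(ZMod 4)[X]` the equation `2 * f = 2 * g` says
`f ≡ g (mod 2)`, so only the classes of `a`, `r` and `B` modulo 2 matter. -/
structure ConvShapeMod4 (a r B : Polynomial (ZMod 4))
    (W : Matrix (Fin 2) (Fin 2) (Polynomial (ZMod 4))) : Prop where
  entry_zero_zero : W 0 0 = 1 + 2 * a
  entry_zero_one : W 0 1 = 1 + X * W 1 0 + 2 * r
  entry_one_zero_add_comp : W 1 0 + (W 1 0).comp (-X) = 2
  two_mul_entry_one_zero : 2 * W 1 0 = 2 * B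
  entry_one_one : ∃ c, W 1 1 = 1 + 2 * c

lemma ConvShapeMod4.doubling {a r B : Polynomial (ZMod 4)}
    {W : Matrix (Fin 2) (Fin 2) (Polynomial (ZMod 4))} (h : ConvShapeMod4 a r B W) :
    ConvShapeMod4 (a + r + X) (X * B) (1 + X * B ^ 2)
      ((compRingHom (-X)).mapMatrix W * !![0, -X; 1, 0] * W) := by
  obtain ⟨p, q, b, d, rfl⟩ : ∃ p q b d, W = !![p, q; b, d] := ⟨_, _, _, _, W.eta_fin_two⟩
  obtain ⟨hp, hq, hb, hB, c, hd⟩ := h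
  simp only [Matrix.of_apply, Matrix.cons_val', Matrix.cons_val_zero, Matrix.cons_val_one,
    Matrix.empty_val', Matrix.cons_val_fin_one] at hp hq hb hB hd
  have hψp : p.comp (-X) = p := by rw [hp, one_add_two_mul_comp_neg_X]
  have hψd : d.comp (-X) = d := by rw [hd, one_add_two_mul_comp_neg_X]
  have hψb : b.comp (-X) = 2 - b := by linear_combination hb
  have hψq : q.comp (-X) = 1 - X * (2 - b) + 2 * r := by
    rw [hq]
    simp [hψb, two_mul_comp_neg_X, sub_eq_add_neg]
  have hW : (compRingHom (-X)).mapMatrix !![p, q; b, d] * !![0, -X; 1, 0] * !![p, q; b, d] =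
      !![(1 - X * (2 - b) + 2 * r) * p - X * p * b, (1 - X * (2 - b) + 2 * r) * q - X * p * d;
        d * p - X * (2 - b) * b, d * q - X * (2 - b) * d] := by
    rw [Matrix.eta_fin_two ((compRingHom (-X)).mapMatrix _)]
    simp only [RingHom.mapMatrix_apply, Matrix.map_apply, coe_compRingHom_apply, Matrix.of_apply,
      Matrix.cons_val', Matrix.cons_val_zero, Matrix.cons_val_one, Matrix.empty_val',
      Matrix.cons_val_fin_one, Matrix.mul_fin_two, hψp, hψq, hψb, hψd]
    ring_nf
  rw [hW]
  refine ⟨?_, ?_, ?_, ?_, c + X * b + r - X, ?_⟩ <;>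
    simp only [Matrix.of_apply, Matrix.cons_val', Matrix.cons_val_zero, Matrix.cons_val_one,
      Matrix.empty_val', Matrix.cons_val_fin_one]
  · rw [hp]
    linear_combination (a * r - a * X - X) * four_eq_zero
  · rw [hp, hq, hd]
    linear_combination X * hB +
      (r ^ 2 + r + X * b * r - X * r - X * a - X * c - 2 * X * a * c - X) * four_eq_zero
  · simp only [sub_comp, mul_comp, X_comp, ofNat_comp, hψp, hψb, hψd]
    rw [hp, hd]
    linear_combination (a + c + 2 * a * c) * four_eq_zero
  · rw [hp, hd]
    linear_combination X * (b + B) * hB + (a + c + 2 * a * c - X * b) * four_eq_zero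
  · rw [hq, hd]
    linear_combination c * (X * b + r - X) * four_eq_zero

lemma convShapeMod4_base : ConvShapeMod4 0 X 1 !![1, 1 - X; 1, 1] := by
  refine ⟨?_, ?_, ?_, ?_, 0, ?_⟩ <;>
    simp only [Matrix.of_apply, Matrix.cons_val', Matrix.cons_val_zero, Matrix.cons_val_one,
      Matrix.empty_val', Matrix.cons_val_fin_one]
  · ring
  · linear_combination (-X) * four_eq_zero
  · rw [one_comp, one_add_one_eq_two]
  · ring

noncomputable def levelB : ℕ → Polynomial (ZMod 4)
  | 0 => 1
  | l + 1 => 1 + X * levelB l ^ 2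

noncomputable def levelR : ℕ → Polynomial (ZMod 4)
  | 0 => X
  | l + 1 => X * levelB l

noncomputable def levelA : ℕ → Polynomial (ZMod 4)
  | 0 => 0
  | l + 1 => levelA l + levelR l + X

lemma convShapeMod4_tmConv (l : ℕ) :
    ConvShapeMod4 (levelA l) (levelR l) (levelB l)
      ((mapRingHom (Int.castRingHom (ZMod 4))).mapMatrix (tmConv (2 ^ (l + 1) - 2))) := by
  induction l with
  | zero =>
    have h0 : (mapRingHom (Int.castRingHom (ZMod 4))).mapMatrix (tmConv (2 ^ (0 + 1) - 2)) =
        !![1, 1 - X; 1, 1] := by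
      ext i j
      fin_cases i <;> fin_cases j <;> simp [tmConv, Ptm, Qtm]
    rw [h0]
    exact convShapeMod4_base
  | succ l ih =>
    set N := 2 ^ (l + 1) - 2
    have hN : N + 2 = 2 ^ (l + 1) := Nat.sub_add_cancel (Nat.le_self_pow (by omega) 2)
    have hdouble := tmConv_two_mul_add_two (N := N) fun j hj => by
      rw [hN] at hj ⊢
      exact tmSeq_two_pow_add hj
    have hcomm : ∀ M : Matrix (Fin 2) (Fin 2) ℤ[X],
        (mapRingHom (Int.castRingHom (ZMod 4))).mapMatrix ((compRingHom (-X)).mapMatrix M) =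
          (compRingHom (-X)).mapMatrix ((mapRingHom (Int.castRingHom (ZMod 4))).mapMatrix M) := by
      intro M
      ext i j
      simp [Polynomial.map_comp]
    have hJ : (mapRingHom (Int.castRingHom (ZMod 4))).mapMatrix !![0, -X; 1, (0 : ℤ[X])] =
        !![0, -X; 1, 0] := by
      ext i j
      fin_cases i <;> fin_cases j <;> simp
    rw [show 2 ^ (l + 1 + 1) - 2 = 2 * N + 2 by rw [pow_succ]; omega, hdouble, map_mul, map_mul,
      hcomm, hJ]
    exact ih.doubling

lemma two_mul_sq_eq_two_mul_sq {R : Type*} [CommRing R] {u v : R} (h : 2 * u = 2 * v) :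
    2 * u ^ 2 = 2 * v ^ 2 := by
  linear_combination (u + v) * h

lemma two_mul_X_mul_levelB_succ_sub (l : ℕ) :
    2 * (X * (levelB (l + 1) - levelB l)) = 2 * X ^ 2 ^ (l + 1) := by
  induction l with
  | zero =>
    simp only [levelB]
    ring
  | succ l ih =>
    have hB₂ : levelB (l + 2) = 1 + X * levelB (l + 1) ^ 2 := rfl
    have hB₁ : levelB (l + 1) = 1 + X * levelB l ^ 2 := rfl
    calc 2 * (X * (levelB (l + 2) - levelB (l + 1)))
        = 2 * (X * (levelB (l + 1) - levelB l)) ^ 2 := by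
          linear_combination 2 * X * (hB₂ - hB₁) +
            (X ^ 2 * levelB l * (levelB (l + 1) - levelB l)) * four_eq_zero
      _ = 2 * X ^ 2 ^ (l + 2) := by
          rw [two_mul_sq_eq_two_mul_sq ih]
          ring

lemma two_mul_levelA_two_mul_add_one (m : ℕ) :
    2 * levelA (2 * m + 1) = 2 * (SoPoly m).map (Int.castRingHom (ZMod 4)) := by
  induction m with
  | zero =>
    simp only [levelA, levelR, SoPoly, Finset.range_zero, Finset.sum_empty, Polynomial.map_zero]
    linear_combination X * four_eq_zero
  | succ m ih =>
    have hA : levelA (2 * (m + 1) + 1) =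
        levelA (2 * m + 1) + X * levelB (2 * m) + X * levelB (2 * m + 1) + 2 * X := by
      rw [show 2 * (m + 1) + 1 = 2 * m + 1 + 1 + 1 by ring, levelA, levelA, levelR, levelR]
      ring
    rw [hA, SoPoly, Finset.sum_range_succ, ← SoPoly]
    simp only [Polynomial.map_add, Polynomial.map_pow, map_X]
    linear_combination ih + two_mul_X_mul_levelB_succ_sub (2 * m) +
      (X * levelB (2 * m) + X) * four_eq_zero


lemma map_Ptm_two_pow_sub_one (l : ℕ) :
    (Ptm (2 ^ (l + 1) - 1)).map (Int.castRingHom (ZMod 4)) = 1 + 2 * levelA l := by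
  have h := (convShapeMod4_tmConv l).entry_zero_zero
  simp only [tmConv, RingHom.mapMatrix_apply, Matrix.map_apply, Matrix.of_apply,
    Matrix.cons_val', Matrix.cons_val_zero, Matrix.empty_val', Matrix.cons_val_fin_one,
    coe_mapRingHom] at h
  have : 2 ≤ 2 ^ (l + 1) := Nat.le_self_pow (by omega) 2
  rwa [show 2 ^ (l + 1) - 2 + 1 = 2 ^ (l + 1) - 1 by omega] at h

lemma four_dvd_coeff_of_map_eq_zero {f : ℤ[X]} (h : f.map (Int.castRingHom (ZMod 4)) = 0)
    (k : ℕ) : (4 : ℤ) ∣ f.coeff k := by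
  have hk := congrArg (coeff · k) h
  simp only [coeff_map, coeff_zero, eq_intCast] at hk
  exact (ZMod.intCast_zmod_eq_zero_iff_dvd _ 4).mp hk

/-- P(2^(2m)−1)(x) ≡ 1 + 2·S^o_{m−1}(x) (mod 4). -/
theorem Ptm_pow_even_sub_one_mod_four (m : ℕ) (hm : 1 ≤ m) :
    ∀ k, (4 : ℤ) ∣ (Ptm (2 ^ (2 * m) - 1) - (1 + 2 * SoPoly (m - 1))).coeff k := by
  obtain ⟨m, rfl⟩ : ∃ m', m = m' + 1 := ⟨m - 1, by omega⟩
  refine four_dvd_coeff_of_map_eq_zero ?_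
  rw [Nat.add_sub_cancel, show 2 * (m + 1) = 2 * m + 1 + 1 by ring, Polynomial.map_sub,
    map_Ptm_two_pow_sub_one]
  simp [two_mul_levelA_two_mul_add_one]
end

section
/- For every integer m ≥ 0, the polynomial x·P(2^{2m+1}−2)(x) is congruent to x + S_{2m}(x)² − 2x·S^o_m(x) modulo 4 (equivalently, P(2^{2m+1}−2)(x) ≡ 1 + x^{−1}·S_{2m}(x)² − 2·S^o_m(x) mod 4), i.e. every coefficient of the difference is divisible by 4. -/
open Polynomial

/- ---------------- auxiliary development ---------------- -/
set_option maxHeartbeats 2000000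

abbrev R4 := Polynomial (ZMod 4)

lemma four_eq_zero_s4 : (4 : R4) = 0 := by
  rw [show (4:R4) = C (4:ZMod 4) from (map_ofNat C 4).symm, show (4:ZMod 4) = 0 by decide,
    map_zero]

noncomputable def sp : ℕ → R4
  | 0 => 0
  | n+1 => sp n + X^(2^n)

noncomputable def se : ℕ → R4
  | 0 => 0
  | m+1 => se m + X^(4^m)

noncomputable def so : ℕ → R4
  | 0 => 0
  | m+1 => so m + (X^(4^m))^2

noncomputable def hh1 : ℕ → R4
  | 0 => 0
  | m+1 => hh1 m + se m * X^(4^m)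

noncomputable def hh2 : ℕ → R4
  | 0 => 0
  | m+1 => hh2 m + so m * (X^(4^m))^2

lemma se_sq : ∀ m, se m ^ 2 = so m + 2 * hh1 m
  | 0 => by simp [se, so, hh1]
  | m+1 => by
    have ih := se_sq m
    show (se m + X^(4^m)) ^ 2 = (so m + (X^(4^m))^2) + 2 * (hh1 m + se m * X^(4^m))
    linear_combination ih

lemma so_sq : ∀ m, so m ^ 2 = se (m+1) - X + 2 * hh2 m
  | 0 => by
    show (0:R4)^2 = (se 0 + X^(4^0)) - X + 2*0
    norm_num [se]
  | m+1 => by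
    have ih := so_sq m
    have hy : (X:R4)^(4^(m+1)) = (X^(4^m))^4 := by rw [pow_succ, pow_mul]
    show (so m + (X^(4^m))^2) ^ 2
        = (se (m+1) + X^(4^(m+1))) - X + 2 * (hh2 m + so m * (X^(4^m))^2)
    rw [hy]
    linear_combination ih

lemma npow_even (m : ℕ) : (2:ℕ)^(2*m) = 4^m := by
  rw [pow_mul]; norm_num

lemma xpow_even (m : ℕ) : (X:R4)^(2^(2*m)) = X^(4^m) := by rw [npow_even]

lemma xpow_odd (m : ℕ) : (X:R4)^(2^(2*m+1)) = (X^(4^m))^2 := by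
  rw [show (2:ℕ)^(2*m+1) = 4^m*2 by rw [pow_succ, npow_even], pow_mul]

lemma sp_even : ∀ m, sp (2*m) = se m + so m
  | 0 => by simp [sp, se, so]
  | m+1 => by
    have ih := sp_even m
    show sp ((2*m+1)+1) = se (m+1) + so (m+1)
    rw [sp, sp, ih, xpow_even, xpow_odd,
      show se (m+1) = se m + X^(4^m) from rfl, show so (m+1) = so m + (X^(4^m))^2 from rfl]
    ring

lemma sp_odd (m : ℕ) : sp (2*m+1) = se m + so m + X^(4^m) := by
  rw [sp, sp_even, xpow_even]

noncomputable def UOm (m : ℕ) : Matrix (Fin 2) (Fin 2) R4 :=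
  !![1 + X + sp (2*m)^2 + 2*sp (2*m) + 2*X*so m, X + 2*X*(se m - X);
     1 + 2*X + 2*sp (2*m), X + sp (2*m)^2 + 2*X*so m]

noncomputable def VOm (m : ℕ) : Matrix (Fin 2) (Fin 2) R4 :=
  !![1 + X + sp (2*m)^2 + 2*sp (2*m) + 2*X*so m + 2*X, -(X + 2*X*(se m - X));
     1 + 2*X + 2*sp (2*m), X + sp (2*m)^2 + 2*X*so m + 2*X]

noncomputable def UEm (j : ℕ) : Matrix (Fin 2) (Fin 2) R4 :=
  !![1 + X + sp (2*j+1)^2 + 2*sp (2*j+1) + 2*X*se (j+1), X + 2*X*so j;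
     1 + 2*sp (2*j+1), X + sp (2*j+1)^2 + 2*X*se (j+1)]

noncomputable def VEm (j : ℕ) : Matrix (Fin 2) (Fin 2) R4 :=
  !![1 + X + sp (2*j+1)^2 + 2*sp (2*j+1) + 2*X*se (j+1) + 2*X, -(X + 2*X*so j);
     1 + 2*sp (2*j+1), X + sp (2*j+1)^2 + 2*X*se (j+1) + 2*X]

lemma step_odd1 (j : ℕ) : VEm j * UEm j = UOm (j+1) := by
  have he := se_sq j
  have ho := so_sq j
  rw [show se (j+1) = se j + X^(4^j) from rfl] at ho
  have h4 : (4:R4) = 0 := four_eq_zero_s4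
  ext i k : 1
  fin_cases i <;> fin_cases k <;>
    simp only [UEm, VEm, UOm, VOm, Matrix.mul_apply, Fin.sum_univ_two, Fin.isValue,
      sp_odd, sp_even, se, so, Fin.zero_eta, Fin.mk_one, Matrix.cons_val', Matrix.cons_val_zero, Matrix.cons_val_one, Matrix.head_cons, Matrix.head_fin_const, Matrix.empty_val', Matrix.cons_val_fin_one, Matrix.of_apply]
  · linear_combination ((((22) + (2)*(hh1 j) + (24)*(X^(4^j)) + (6)*(X^(4^j))^2 + (17)*(so j) + (12)*(so j)*(X^(4^j)) + (6)*(so j)^2 + (4)*(se j) + (4)*(se j)*(X^(4^j)) + (4)*(se j)*(so j) + (1)*(se j)^2 + (16)*(X) + (12)*(X)*(X^(4^j)) + (8)*(X)*(so j) + (4)*(X)*(se j) + (4)*(X)^2 : R4))) * he + ((((22) + (2)*(hh2 j) + (12)*(hh1 j) + (25)*(X^(4^j)) + (6)*(X^(4^j))^2 + (10)*(so j) + (4)*(so j)*(X^(4^j)) + (1)*(so j)^2 + (17)*(se j) + (12)*(se j)*(X^(4^j)) + (4)*(se j)*(so j) + (7)*(X) + (4)*(X)*(X^(4^j)) + (4)*(X)*(se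 j) : R4))) * ho + ((((11)*(hh2 j) + (1)*(hh2 j)^2 + (11)*(hh1 j) + (6)*(hh1 j)*(hh2 j) + (1)*(hh1 j)^2 + (6)*(X^(4^j)) + (13)*(X^(4^j))*(hh2 j) + (15)*(X^(4^j))*(hh1 j) + (7)*(X^(4^j))^2 + (3)*(X^(4^j))^2*(hh2 j) + (3)*(X^(4^j))^2*(hh1 j) + (2)*(X^(4^j))^3 + (6)*(so j) + (5)*(so j)*(hh2 j) + (9)*(so j)*(hh1 j) + (11)*(so j)*(X^(4^j)) + (2)*(so j)*(X^(4^j))*(hh2 j) + (6)*(so j)*(X^(4^j))*(hh1 j) + (5)*(so j)*(X^(4^j))^2 + (1)*(so j)*(X^(4^j))^3 + (6)*(se j) + (9)*(se j)*(hh2 j) + (5)*(se j)*(hh1 j) + (13)*(se j)*(X^(4^j)) + (6)*(se j)*(X^(4^j))*(hh2 j) + (2)*(se j)*(X^(4^j))*(hh1 j) + (7)*(se j)*(X^(4^j))^2 + (1)*(se j)*(X^(4^j))^3 + (6)*(se j)*(so j) + (2)*(se j)*(so j)*(hh2 j) + (2)*(se j)*(so j)*(hh1 j) + (9)*(se j)*(so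 j)*(X^(4^j)) + (3)*(se j)*(so j)*(X^(4^j))^2 + (-5)*(X) + (3)*(X)*(hh2 j) + (5)*(X)*(hh1 j) + (-2)*(X)*(X^(4^j)) + (2)*(X)*(X^(4^j))*(hh2 j) + (6)*(X)*(X^(4^j))*(hh1 j) + (2)*(X)*(X^(4^j))^2 + (1)*(X)*(X^(4^j))^3 + (2)*(X)*(so j) + (4)*(X)*(so j)*(hh1 j) + (5)*(X)*(so j)*(X^(4^j)) + (2)*(X)*(so j)*(X^(4^j))^2 + (2)*(X)*(se j)*(hh2 j) + (2)*(X)*(se j)*(hh1 j) + (5)*(X)*(se j)*(X^(4^j)) + (3)*(X)*(se j)*(X^(4^j))^2 + (3)*(X)*(se j)*(so j) + (4)*(X)*(se j)*(so j)*(X^(4^j)) + (-1)*(X)^2 + (2)*(X)^2*(hh1 j) + (1)*(X)^2*(X^(4^j)) + (1)*(X)^2*(X^(4^j))^2 + (1)*(X)^2*(so j) + (1)*(X)^2*(se j) + (2)*(X)^2*(se j)*(X^(4^j)) : R4))) * h4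
  · linear_combination ((0 : R4)) * he + ((((4)*(X) : R4))) * ho + ((((2)*(X)*(hh2 j) + (1)*(X)*(X^(4^j)) + (1)*(X)*(so j) + (1)*(X)*(so j)*(X^(4^j)) + (1)*(X)*(se j) + (1)*(X)*(se j)*(so j) + (1)*(X)^2*(so j) : R4))) * h4
  · linear_combination ((((18) + (12)*(X^(4^j)) + (12)*(so j) + (4)*(se j) + (8)*(X) : R4))) * he + ((((18) + (12)*(X^(4^j)) + (4)*(so j) + (12)*(se j) : R4))) * ho + ((((9)*(hh2 j) + (9)*(hh1 j) + (5)*(X^(4^j)) + (6)*(X^(4^j))*(hh2 j) + (6)*(X^(4^j))*(hh1 j) + (4)*(X^(4^j))^2 + (1)*(X^(4^j))^3 + (5)*(so j) + (2)*(so j)*(hh2 j) + (6)*(so j)*(hh1 j) + (7)*(so j)*(X^(4^j)) + (3)*(so j)*(X^(4^j))^2 + (5)*(se j) + (6)*(se j)*(hh2 j) + (2)*(se j)*(hh1 j) + (9)*(se j)*(X^(4^j)) + (3)*(se j)*(X^(4^j))^2 + (5)*(se j)*(so j) + (6)*(se j)*(so j)*(X^(4^j)) + (-4)*(X) + (4)*(X)*(hh1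 j) + (2)*(X)*(X^(4^j))^2 + (3)*(X)*(so j) + (2)*(X)*(so j)*(X^(4^j)) + (4)*(X)*(se j)*(X^(4^j)) + (2)*(X)*(se j)*(so j) : R4))) * h4
  · linear_combination ((((4) + (2)*(hh1 j) + (12)*(X^(4^j)) + (6)*(X^(4^j))^2 + (5)*(so j) + (12)*(so j)*(X^(4^j)) + (6)*(so j)^2 + (4)*(se j)*(X^(4^j)) + (4)*(se j)*(so j) + (1)*(se j)^2 + (8)*(X) + (12)*(X)*(X^(4^j)) + (8)*(X)*(so j) + (4)*(X)*(se j) + (4)*(X)^2 : R4))) * he + ((((4) + (2)*(hh2 j) + (12)*(hh1 j) + (13)*(X^(4^j)) + (6)*(X^(4^j))^2 + (6)*(so j) + (4)*(so j)*(X^(4^j)) + (1)*(so j)^2 + (5)*(se j) + (12)*(se j)*(X^(4^j)) + (4)*(se j)*(so j) + (15)*(X) + (4)*(X)*(X^(4^j)) + (4)*(X)*(se j) : R4))) * ho + ((((2)*(hh2 j) + (1)*(hh2 j)^2 + (2)*(hh1 j) + (6)*(hh1 j)*(hh2 j) + (1)*(hh1 j)^2 + (1)*(X^(4^j)) + (7)*(X^(4^j))*(hh2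 j) + (9)*(X^(4^j))*(hh1 j) + (3)*(X^(4^j))^2 + (3)*(X^(4^j))^2*(hh2 j) + (3)*(X^(4^j))^2*(hh1 j) + (1)*(X^(4^j))^3 + (1)*(so j) + (3)*(so j)*(hh2 j) + (3)*(so j)*(hh1 j) + (4)*(so j)*(X^(4^j)) + (2)*(so j)*(X^(4^j))*(hh2 j) + (6)*(so j)*(X^(4^j))*(hh1 j) + (2)*(so j)*(X^(4^j))^2 + (1)*(so j)*(X^(4^j))^3 + (1)*(se j) + (3)*(se j)*(hh2 j) + (3)*(se j)*(hh1 j) + (4)*(se j)*(X^(4^j)) + (6)*(se j)*(X^(4^j))*(hh2 j) + (2)*(se j)*(X^(4^j))*(hh1 j) + (4)*(se j)*(X^(4^j))^2 + (1)*(se j)*(X^(4^j))^3 + (1)*(se j)*(so j) + (2)*(se j)*(so j)*(hh2 j) + (2)*(se j)*(so j)*(hh1 j) + (3)*(se j)*(so j)*(X^(4^j)) + (3)*(se j)*(so j)*(X^(4^j))^2 + (-1)*(X) + (7)*(X)*(hh2 j) + (1)*(X)*(hh1 j) + (1)*(X)*(X^(4^j)) + (2)*(X)*(X^(4^j))*(hh2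 j) + (6)*(X)*(X^(4^j))*(hh1 j) + (1)*(X)*(X^(4^j))^3 + (1)*(X)*(so j) + (4)*(X)*(so j)*(hh1 j) + (5)*(X)*(so j)*(X^(4^j)) + (2)*(X)*(so j)*(X^(4^j))^2 + (3)*(X)*(se j) + (2)*(X)*(se j)*(hh2 j) + (2)*(X)*(se j)*(hh1 j) + (1)*(X)*(se j)*(X^(4^j)) + (3)*(X)*(se j)*(X^(4^j))^2 + (3)*(X)*(se j)*(so j) + (4)*(X)*(se j)*(so j)*(X^(4^j)) + (-3)*(X)^2 + (2)*(X)^2*(hh1 j) + (1)*(X)^2*(X^(4^j)) + (1)*(X)^2*(X^(4^j))^2 + (1)*(X)^2*(so j) + (1)*(X)^2*(se j) + (2)*(X)^2*(se j)*(X^(4^j)) : R4))) * h4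

lemma step_odd2 (j : ℕ) : UEm j * VEm j = VOm (j+1) := by
  have he := se_sq j
  have ho := so_sq j
  rw [show se (j+1) = se j + X^(4^j) from rfl] at ho
  have h4 : (4:R4) = 0 := four_eq_zero_s4
  ext i k : 1
  fin_cases i <;> fin_cases k <;>
    simp only [UEm, VEm, UOm, VOm, Matrix.mul_apply, Fin.sum_univ_two, Fin.isValue,
      sp_odd, sp_even, se, so, Fin.zero_eta, Fin.mk_one, Matrix.cons_val', Matrix.cons_val_zero, Matrix.cons_val_one, Matrix.head_cons, Matrix.head_fin_const, Matrix.empty_val', Matrix.cons_val_fin_one, Matrix.of_apply]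
  · linear_combination ((((22) + (2)*(hh1 j) + (24)*(X^(4^j)) + (6)*(X^(4^j))^2 + (17)*(so j) + (12)*(so j)*(X^(4^j)) + (6)*(so j)^2 + (4)*(se j) + (4)*(se j)*(X^(4^j)) + (4)*(se j)*(so j) + (1)*(se j)^2 + (16)*(X) + (12)*(X)*(X^(4^j)) + (8)*(X)*(so j) + (4)*(X)*(se j) + (4)*(X)^2 : R4))) * he + ((((22) + (2)*(hh2 j) + (12)*(hh1 j) + (25)*(X^(4^j)) + (6)*(X^(4^j))^2 + (10)*(so j) + (4)*(so j)*(X^(4^j)) + (1)*(so j)^2 + (17)*(se j) + (12)*(se j)*(X^(4^j)) + (4)*(se j)*(so j) + (15)*(X) + (4)*(X)*(X^(4^j)) + (4)*(X)*(se j) : R4))) * ho + ((((11)*(hh2 j) + (1)*(hh2 j)^2 + (11)*(hh1 j) + (6)*(hh1 j)*(hh2 j) + (1)*(hh1 j)^2 + (6)*(X^(4^j)) + (13)*(X^(4^j))*(hh2 j) + (15)*(X^(4^j))*(hh1 j) + (7)*(X^(4^j))^2 + (3)*(X^(4^j))^2*(hh2 j) + (3)*(X^(4^j))^2*(hh1 j)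 + (2)*(X^(4^j))^3 + (6)*(so j) + (5)*(so j)*(hh2 j) + (9)*(so j)*(hh1 j) + (11)*(so j)*(X^(4^j)) + (2)*(so j)*(X^(4^j))*(hh2 j) + (6)*(so j)*(X^(4^j))*(hh1 j) + (5)*(so j)*(X^(4^j))^2 + (1)*(so j)*(X^(4^j))^3 + (6)*(se j) + (9)*(se j)*(hh2 j) + (5)*(se j)*(hh1 j) + (13)*(se j)*(X^(4^j)) + (6)*(se j)*(X^(4^j))*(hh2 j) + (2)*(se j)*(X^(4^j))*(hh1 j) + (7)*(se j)*(X^(4^j))^2 + (1)*(se j)*(X^(4^j))^3 + (6)*(se j)*(so j) + (2)*(se j)*(so j)*(hh2 j) + (2)*(se j)*(so j)*(hh1 j) + (9)*(se j)*(so j)*(X^(4^j)) + (3)*(se j)*(so j)*(X^(4^j))^2 + (-5)*(X) + (7)*(X)*(hh2 j) + (5)*(X)*(hh1 j) + (1)*(X)*(X^(4^j)) + (2)*(X)*(X^(4^j))*(hh2 j) + (6)*(X)*(X^(4^j))*(hh1 j) + (2)*(X)*(X^(4^j))^2 + (1)*(X)*(X^(4^j))^3 + (4)*(X)*(so j) +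 (4)*(X)*(so j)*(hh1 j) + (7)*(X)*(so j)*(X^(4^j)) + (2)*(X)*(so j)*(X^(4^j))^2 + (3)*(X)*(se j) + (2)*(X)*(se j)*(hh2 j) + (2)*(X)*(se j)*(hh1 j) + (5)*(X)*(se j)*(X^(4^j)) + (3)*(X)*(se j)*(X^(4^j))^2 + (5)*(X)*(se j)*(so j) + (4)*(X)*(se j)*(so j)*(X^(4^j)) + (-3)*(X)^2 + (2)*(X)^2*(hh1 j) + (1)*(X)^2*(X^(4^j)) + (1)*(X)^2*(X^(4^j))^2 + (1)*(X)^2*(so j) + (1)*(X)^2*(se j) + (2)*(X)^2*(se j)*(X^(4^j)) : R4))) * h4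
  · linear_combination ((0 : R4)) * he + ((((-4)*(X) : R4))) * ho + ((((-2)*(X)*(hh2 j) + (-1)*(X)*(X^(4^j)) + (-1)*(X)*(so j) + (-1)*(X)*(so j)*(X^(4^j)) + (-1)*(X)*(se j) + (-1)*(X)*(se j)*(so j) + (1)*(X)^2 + (1)*(X)^2*(so j) : R4))) * h4
  · linear_combination ((((18) + (12)*(X^(4^j)) + (12)*(so j) + (4)*(se j) + (8)*(X) : R4))) * he + ((((18) + (12)*(X^(4^j)) + (4)*(so j) + (12)*(se j) : R4))) * ho + ((((9)*(hh2 j) + (9)*(hh1 j) + (5)*(X^(4^j)) + (6)*(X^(4^j))*(hh2 j) + (6)*(X^(4^j))*(hh1 j) + (4)*(X^(4^j))^2 + (1)*(X^(4^j))^3 + (5)*(so j) + (2)*(so j)*(hh2 j) + (6)*(so j)*(hh1 j) + (7)*(so j)*(X^(4^j)) + (3)*(so j)*(X^(4^j))^2 + (5)*(se j) + (6)*(se j)*(hh2 j) + (2)*(se j)*(hh1 j) + (9)*(se j)*(X^(4^j)) + (3)*(se j)*(X^(4^j))^2 + (5)*(se j)*(so j) + (6)*(se j)*(so j)*(X^(4^j))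 + (-4)*(X) + (4)*(X)*(hh1 j) + (2)*(X)*(X^(4^j))^2 + (3)*(X)*(so j) + (2)*(X)*(so j)*(X^(4^j)) + (4)*(X)*(se j)*(X^(4^j)) + (2)*(X)*(se j)*(so j) : R4))) * h4
  · linear_combination ((((4) + (2)*(hh1 j) + (12)*(X^(4^j)) + (6)*(X^(4^j))^2 + (5)*(so j) + (12)*(so j)*(X^(4^j)) + (6)*(so j)^2 + (4)*(se j)*(X^(4^j)) + (4)*(se j)*(so j) + (1)*(se j)^2 + (8)*(X) + (12)*(X)*(X^(4^j)) + (8)*(X)*(so j) + (4)*(X)*(se j) + (4)*(X)^2 : R4))) * he + ((((4) + (2)*(hh2 j) + (12)*(hh1 j) + (13)*(X^(4^j)) + (6)*(X^(4^j))^2 + (6)*(so j) + (4)*(so j)*(X^(4^j)) + (1)*(so j)^2 + (5)*(se j) + (12)*(se j)*(X^(4^j)) + (4)*(se j)*(so j) + (7)*(X) + (4)*(X)*(X^(4^j)) + (4)*(X)*(se j) : R4))) * ho + ((((2)*(hh2 j) + (1)*(hh2 j)^2 + (2)*(hh1 j) + (6)*(hh1 j)*(hh2 j) + (1)*(hh1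 j)^2 + (1)*(X^(4^j)) + (7)*(X^(4^j))*(hh2 j) + (9)*(X^(4^j))*(hh1 j) + (3)*(X^(4^j))^2 + (3)*(X^(4^j))^2*(hh2 j) + (3)*(X^(4^j))^2*(hh1 j) + (1)*(X^(4^j))^3 + (1)*(so j) + (3)*(so j)*(hh2 j) + (3)*(so j)*(hh1 j) + (4)*(so j)*(X^(4^j)) + (2)*(so j)*(X^(4^j))*(hh2 j) + (6)*(so j)*(X^(4^j))*(hh1 j) + (2)*(so j)*(X^(4^j))^2 + (1)*(so j)*(X^(4^j))^3 + (1)*(se j) + (3)*(se j)*(hh2 j) + (3)*(se j)*(hh1 j) + (4)*(se j)*(X^(4^j)) + (6)*(se j)*(X^(4^j))*(hh2 j) + (2)*(se j)*(X^(4^j))*(hh1 j) + (4)*(se j)*(X^(4^j))^2 + (1)*(se j)*(X^(4^j))^3 + (1)*(se j)*(so j) + (2)*(se j)*(so j)*(hh2 j) + (2)*(se j)*(so j)*(hh1 j) + (3)*(se j)*(so j)*(X^(4^j)) + (3)*(se j)*(so j)*(X^(4^j))^2 + (-2)*(X) + (3)*(X)*(hh2 j) + (1)*(X)*(hh1 j)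 + (-2)*(X)*(X^(4^j)) + (2)*(X)*(X^(4^j))*(hh2 j) + (6)*(X)*(X^(4^j))*(hh1 j) + (1)*(X)*(X^(4^j))^3 + (-1)*(X)*(so j) + (4)*(X)*(so j)*(hh1 j) + (3)*(X)*(so j)*(X^(4^j)) + (2)*(X)*(so j)*(X^(4^j))^2 + (2)*(X)*(se j)*(hh2 j) + (2)*(X)*(se j)*(hh1 j) + (1)*(X)*(se j)*(X^(4^j)) + (3)*(X)*(se j)*(X^(4^j))^2 + (1)*(X)*(se j)*(so j) + (4)*(X)*(se j)*(so j)*(X^(4^j)) + (-1)*(X)^2 + (2)*(X)^2*(hh1 j) + (1)*(X)^2*(X^(4^j)) + (1)*(X)^2*(X^(4^j))^2 + (1)*(X)^2*(so j) + (1)*(X)^2*(se j) + (2)*(X)^2*(se j)*(X^(4^j)) : R4))) * h4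

lemma step_even1 (m : ℕ) : VOm m * UOm m = UEm m := by
  have he := se_sq m
  have ho := so_sq m
  rw [show se (m+1) = se m + X^(4^m) from rfl] at ho
  have h4 : (4:R4) = 0 := four_eq_zero_s4
  ext i k : 1
  fin_cases i <;> fin_cases k <;>
    simp only [UEm, VEm, UOm, VOm, Matrix.mul_apply, Fin.sum_univ_two, Fin.isValue,
      sp_odd, sp_even, se, so, Fin.zero_eta, Fin.mk_one, Matrix.cons_val', Matrix.cons_val_zero, Matrix.cons_val_one, Matrix.head_cons, Matrix.head_fin_const, Matrix.empty_val', Matrix.cons_val_fin_one, Matrix.of_apply]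
  · linear_combination ((((22) + (2)*(hh1 m) + (17)*(so m) + (6)*(so m)^2 + (4)*(se m) + (4)*(se m)*(so m) + (1)*(se m)^2 + (8)*(X) + (4)*(X)*(so m) : R4))) * he + ((((22) + (2)*(hh2 m) + (12)*(hh1 m) + (1)*(X^(4^m)) + (10)*(so m) + (1)*(so m)^2 + (17)*(se m) + (4)*(se m)*(so m) + (15)*(X) + (4)*(X)*(so m) + (8)*(X)*(se m) + (4)*(X)^2 : R4))) * ho + ((((11)*(hh2 m) + (1)*(hh2 m)^2 + (11)*(hh1 m) + (6)*(hh1 m)*(hh2 m) + (1)*(hh1 m)^2 + (5)*(X^(4^m)) + (1)*(X^(4^m))*(hh2 m) + (3)*(X^(4^m))*(hh1 m) + (6)*(so m) + (5)*(so m)*(hh2 m) + (9)*(so m)*(hh1 m) + (2)*(so m)*(X^(4^m)) + (6)*(se m) + (9)*(se m)*(hh2 m) + (5)*(se m)*(hh1 m) + (4)*(se m)*(X^(4^m)) + (6)*(se m)*(so m) + (2)*(se m)*(so m)*(hh2 m) + (2)*(se m)*(so m)*(hh1 m) + (1)*(se m)*(so m)*(X^(4^m)) + (-5)*(X) + (7)*(X)*(hh2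 m) + (1)*(X)*(hh1 m) + (3)*(X)*(X^(4^m)) + (2)*(X)*(so m) + (2)*(X)*(so m)*(hh2 m) + (2)*(X)*(so m)*(hh1 m) + (1)*(X)*(so m)*(X^(4^m)) + (4)*(X)*(se m)*(hh2 m) + (2)*(X)*(se m)*(X^(4^m)) + (3)*(X)*(se m)*(so m) + (-3)*(X)^2 + (2)*(X)^2*(hh2 m) + (1)*(X)^2*(X^(4^m)) + (2)*(X)^2*(so m) + (-1)*(X)^2*(se m) : R4))) * h4
  · linear_combination ((((4)*(X) : R4))) * he + ((0 : R4)) * ho + ((((2)*(X)*(hh1 m) + (1)*(X)*(so m) + (1)*(X)*(se m) + (1)*(X)*(se m)*(so m) + (-1)*(X)^2*(so m) + (-1)*(X)^3 : R4))) * h4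
  · linear_combination ((((18) + (12)*(so m) + (4)*(se m) + (4)*(X) : R4))) * he + ((((18) + (4)*(so m) + (12)*(se m) + (12)*(X) : R4))) * ho + ((((9)*(hh2 m) + (9)*(hh1 m) + (4)*(X^(4^m)) + (5)*(so m) + (2)*(so m)*(hh2 m) + (6)*(so m)*(hh1 m) + (1)*(so m)*(X^(4^m)) + (5)*(se m) + (6)*(se m)*(hh2 m) + (2)*(se m)*(hh1 m) + (3)*(se m)*(X^(4^m)) + (5)*(se m)*(so m) + (-3)*(X) + (6)*(X)*(hh2 m) + (2)*(X)*(hh1 m) + (3)*(X)*(X^(4^m)) + (4)*(X)*(so m) + (3)*(X)*(se m) + (4)*(X)*(se m)*(so m) + (-1)*(X)^2 + (2)*(X)^2*(so m) : R4))) * h4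
  · linear_combination ((((4) + (2)*(hh1 m) + (5)*(so m) + (6)*(so m)^2 + (4)*(se m)*(so m) + (1)*(se m)^2 + (16)*(X) + (4)*(X)*(so m) : R4))) * he + ((((4) + (2)*(hh2 m) + (12)*(hh1 m) + (1)*(X^(4^m)) + (6)*(so m) + (1)*(so m)^2 + (5)*(se m) + (4)*(se m)*(so m) + (7)*(X) + (4)*(X)*(so m) + (8)*(X)*(se m) + (4)*(X)^2 : R4))) * ho + ((((2)*(hh2 m) + (1)*(hh2 m)^2 + (2)*(hh1 m) + (6)*(hh1 m)*(hh2 m) + (1)*(hh1 m)^2 + (1)*(X^(4^m)) + (1)*(X^(4^m))*(hh2 m) + (3)*(X^(4^m))*(hh1 m) + (1)*(so m) + (3)*(so m)*(hh2 m) + (3)*(so m)*(hh1 m) + (1)*(so m)*(X^(4^m)) + (1)*(se m) + (3)*(se m)*(hh2 m) + (3)*(se m)*(hh1 m) + (1)*(se m)*(X^(4^m)) + (1)*(se m)*(so m) + (2)*(se m)*(so m)*(hh2 m) + (2)*(se m)*(so m)*(hh1 m) + (1)*(se m)*(so m)*(X^(4^m)) + (-1)*(X) + (3)*(X)*(hh2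 m) + (5)*(X)*(hh1 m) + (1)*(X)*(X^(4^m)) + (3)*(X)*(so m) + (2)*(X)*(so m)*(hh2 m) + (2)*(X)*(so m)*(hh1 m) + (1)*(X)*(so m)*(X^(4^m)) + (1)*(X)*(se m) + (4)*(X)*(se m)*(hh2 m) + (2)*(X)*(se m)*(X^(4^m)) + (3)*(X)*(se m)*(so m) + (-1)*(X)^2 + (2)*(X)^2*(hh2 m) + (1)*(X)^2*(X^(4^m)) + (-1)*(X)^2*(se m) + (-2)*(X)^3 : R4))) * h4

lemma step_even2 (m : ℕ) : UOm m * VOm m = VEm m := by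
  have he := se_sq m
  have ho := so_sq m
  rw [show se (m+1) = se m + X^(4^m) from rfl] at ho
  have h4 : (4:R4) = 0 := four_eq_zero_s4
  ext i k : 1
  fin_cases i <;> fin_cases k <;>
    simp only [UEm, VEm, UOm, VOm, Matrix.mul_apply, Fin.sum_univ_two, Fin.isValue,
      sp_odd, sp_even, se, so, Fin.zero_eta, Fin.mk_one, Matrix.cons_val', Matrix.cons_val_zero, Matrix.cons_val_one, Matrix.head_cons, Matrix.head_fin_const, Matrix.empty_val', Matrix.cons_val_fin_one, Matrix.of_apply]
  · linear_combination ((((22) + (2)*(hh1 m) + (17)*(so m) + (6)*(so m)^2 + (4)*(se m) + (4)*(se m)*(so m) + (1)*(se m)^2 + (16)*(X) + (4)*(X)*(so m) : R4))) * he + ((((22) + (2)*(hh2 m) + (12)*(hh1 m) + (1)*(X^(4^m)) + (10)*(so m) + (1)*(so m)^2 + (17)*(se m) + (4)*(se m)*(so m) + (15)*(X) + (4)*(X)*(so m) + (8)*(X)*(se m) + (4)*(X)^2 : R4))) * ho + ((((11)*(hh2 m) + (1)*(hh2 m)^2 + (11)*(hh1 m) + (6)*(hh1 m)*(hh2 m)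 + (1)*(hh1 m)^2 + (5)*(X^(4^m)) + (1)*(X^(4^m))*(hh2 m) + (3)*(X^(4^m))*(hh1 m) + (6)*(so m) + (5)*(so m)*(hh2 m) + (9)*(so m)*(hh1 m) + (2)*(so m)*(X^(4^m)) + (6)*(se m) + (9)*(se m)*(hh2 m) + (5)*(se m)*(hh1 m) + (4)*(se m)*(X^(4^m)) + (6)*(se m)*(so m) + (2)*(se m)*(so m)*(hh2 m) + (2)*(se m)*(so m)*(hh1 m) + (1)*(se m)*(so m)*(X^(4^m)) + (-5)*(X) + (7)*(X)*(hh2 m) + (5)*(X)*(hh1 m) + (3)*(X)*(X^(4^m)) + (5)*(X)*(so m) + (2)*(X)*(so m)*(hh2 m) + (2)*(X)*(so m)*(hh1 m) + (1)*(X)*(so m)*(X^(4^m)) + (2)*(X)*(se m) + (4)*(X)*(se m)*(hh2 m) + (2)*(X)*(se m)*(X^(4^m)) + (5)*(X)*(se m)*(so m) + (-3)*(X)^2 + (2)*(X)^2*(hh2 m) + (1)*(X)^2*(X^(4^m)) + (-1)*(X)^2*(se m) + (-2)*(X)^3 : R4))) * h4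
  · linear_combination ((((-4)*(X) : R4))) * he + ((0 : R4)) * ho + ((((-2)*(X)*(hh1 m) + (-1)*(X)*(so m) + (-1)*(X)*(se m) + (-1)*(X)*(se m)*(so m) + (1)*(X)^2 + (1)*(X)^2*(so m) + (2)*(X)^2*(se m) + (-1)*(X)^3 : R4))) * h4
  · linear_combination ((((18) + (12)*(so m) + (4)*(se m) + (4)*(X) : R4))) * he + ((((18) + (4)*(so m) + (12)*(se m) + (12)*(X) : R4))) * ho + ((((9)*(hh2 m) + (9)*(hh1 m) + (4)*(X^(4^m)) + (5)*(so m) + (2)*(so m)*(hh2 m) + (6)*(so m)*(hh1 m) + (1)*(so m)*(X^(4^m)) + (5)*(se m) + (6)*(se m)*(hh2 m) + (2)*(se m)*(hh1 m) + (3)*(se m)*(X^(4^m)) + (5)*(se m)*(so m) + (-3)*(X) + (6)*(X)*(hh2 m) + (2)*(X)*(hh1 m) + (3)*(X)*(X^(4^m)) + (4)*(X)*(so m) + (3)*(X)*(se m) + (4)*(X)*(se m)*(so m) + (-1)*(X)^2 + (2)*(X)^2*(so m) : R4))) * h4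
  · linear_combination ((((4) + (2)*(hh1 m) + (5)*(so m) + (6)*(so m)^2 + (4)*(se m)*(so m) + (1)*(se m)^2 + (8)*(X) + (4)*(X)*(so m) : R4))) * he + ((((4) + (2)*(hh2 m) + (12)*(hh1 m) + (1)*(X^(4^m)) + (6)*(so m) + (1)*(so m)^2 + (5)*(se m) + (4)*(se m)*(so m) + (7)*(X) + (4)*(X)*(so m) + (8)*(X)*(se m) + (4)*(X)^2 : R4))) * ho + ((((2)*(hh2 m) + (1)*(hh2 m)^2 + (2)*(hh1 m) + (6)*(hh1 m)*(hh2 m) + (1)*(hh1 m)^2 + (1)*(X^(4^m)) + (1)*(X^(4^m))*(hh2 m) + (3)*(X^(4^m))*(hh1 m) + (1)*(so m) + (3)*(so m)*(hh2 m) + (3)*(so m)*(hh1 m) + (1)*(so m)*(X^(4^m)) + (1)*(se m) + (3)*(se m)*(hh2 m) + (3)*(se m)*(hh1 m) + (1)*(se m)*(X^(4^m)) + (1)*(se m)*(so m) + (2)*(se m)*(so m)*(hh2 m) + (2)*(se m)*(so m)*(hh1 m) + (1)*(se m)*(so m)*(X^(4^m)) + (-2)*(X) + (3)*(X)*(hh2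 m) + (1)*(X)*(hh1 m) + (1)*(X)*(X^(4^m)) + (2)*(X)*(so m)*(hh2 m) + (2)*(X)*(so m)*(hh1 m) + (1)*(X)*(so m)*(X^(4^m)) + (-1)*(X)*(se m) + (4)*(X)*(se m)*(hh2 m) + (2)*(X)*(se m)*(X^(4^m)) + (1)*(X)*(se m)*(so m) + (-1)*(X)^2 + (2)*(X)^2*(hh2 m) + (1)*(X)^2*(X^(4^m)) + (2)*(X)^2*(so m) + (-1)*(X)^2*(se m) : R4))) * h4


noncomputable def amat (s : ℤ) : Matrix (Fin 2) (Fin 2) R4 := !![1, C ((s : ZMod 4)) * X; 1, 0]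

noncomputable def Fg (f : ℕ → ℤ) : ℕ → Matrix (Fin 2) (Fin 2) R4
  | 0 => 1
  | n+1 => amat (f n) * Fg f n

lemma Fg_add (f : ℕ → ℤ) (n : ℕ) :
    ∀ m, Fg f (n + m) = Fg (fun i => f (n + i)) m * Fg f n
  | 0 => by simp [Fg]
  | m+1 => by
    have ih := Fg_add f n m
    show Fg f ((n+m)+1) = Fg (fun i => f (n+i)) (m+1) * Fg f n
    rw [Fg, Fg, ih, Matrix.mul_assoc]

lemma Fg_congr (f g : ℕ → ℤ) : ∀ n, (∀ i, i < n → f i = g i) → Fg f n = Fg g n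
  | 0, _ => rfl
  | n+1, h => by
    rw [Fg, Fg, h n (Nat.lt_succ_self n), Fg_congr f g n (fun i hi => h i (hi.trans (Nat.lt_succ_self n)))]

lemma tm_two_mul (n : ℕ) : tmSeq (2*n) = tmSeq n := by
  cases n with
  | zero => simp
  | succ k =>
    have h1 : 2*(k+1) = (2*k+1)+1 := by ring
    rw [h1, tmSeq]
    have h2 : (2*k+1+1) % 2 = 0 := by omega
    have h3 : (2*k+1+1) / 2 = k+1 := by omega
    simp [h2, h3]

lemma tm_two_mul_add_one (n : ℕ) : tmSeq (2*n+1) = -tmSeq n := by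
  rw [show 2*n+1 = (2*n)+1 from rfl, tmSeq]
  have h2 : (2*n+1) % 2 = 1 := by omega
  have h3 : (2*n+1) / 2 = n := by omega
  simp [h2, h3]

lemma tm_shift : ∀ k : ℕ, ∀ i < 2^k, tmSeq (2^k + i) = -tmSeq i
  | 0 => by
    intro i hi
    interval_cases i
    simpa using tm_two_mul_add_one 0
  | k+1 => by
    intro i hi
    rcases Nat.even_or_odd i with ⟨j, hj⟩ | ⟨j, hj⟩
    · subst hj
      have hj' : j < 2^k := by
        have : 2^(k+1) = 2*2^k := by ring
        omega
      rw [show 2^(k+1) + (j+j) = 2*(2^k + j) by ring, tm_two_mul,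
        tm_shift k j hj', show j + j = 2*j by ring, tm_two_mul]
    · subst hj
      have hj' : j < 2^k := by
        have : 2^(k+1) = 2*2^k := by ring
        omega
      rw [show 2^(k+1) + (2*j+1) = 2*(2^k + j)+1 by ring, tm_two_mul_add_one,
        tm_shift k j hj', tm_two_mul_add_one]

lemma Fg_double_t (k : ℕ) :
    Fg tmSeq (2^(k+1)) = Fg (fun n => -tmSeq n) (2^k) * Fg tmSeq (2^k) := by
  have h := Fg_add tmSeq (2^k) (2^k)
  have hc : Fg (fun i => tmSeq (2^k + i)) (2^k) = Fg (fun n => -tmSeq n) (2^k) :=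
    Fg_congr _ _ _ (fun i hi => tm_shift k i hi)
  rw [show 2^(k+1) = 2^k + 2^k by ring, h]
  exact congrArg (fun M => M * Fg tmSeq (2^k)) hc

lemma Fg_double_nt (k : ℕ) :
    Fg (fun n => -tmSeq n) (2^(k+1)) = Fg tmSeq (2^k) * Fg (fun n => -tmSeq n) (2^k) := by
  have h := Fg_add (fun n => -tmSeq n) (2^k) (2^k)
  have hc : Fg (fun i => -tmSeq (2^k + i)) (2^k) = Fg tmSeq (2^k) :=
    Fg_congr _ _ _ (fun i hi => by rw [tm_shift k i hi, neg_neg])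
  rw [show 2^(k+1) = 2^k + 2^k by ring, h]
  exact congrArg (fun M => M * Fg (fun n => -tmSeq n) (2^k)) hc

lemma tm0 : tmSeq 0 = 1 := by simp [tmSeq]
lemma tm1 : tmSeq 1 = -1 := by simp [tmSeq]
lemma tm2 : tmSeq 2 = -1 := by norm_num [tmSeq]
lemma tm3 : tmSeq 3 = 1 := by norm_num [tmSeq]

lemma sp_one : sp 1 = X := by
  rw [show (1:ℕ) = 0+1 from rfl, sp, sp]
  simp

lemma main_even : ∀ j : ℕ,
    Fg tmSeq (2^(2*j+2)) = UEm j ∧ Fg (fun n => -tmSeq n) (2^(2*j+2)) = VEm j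
  | 0 => by
    have h4 : (4:R4) = 0 := four_eq_zero_s4
    constructor
    · have e1 : Fg tmSeq (2^(2*0+2))
          = amat (tmSeq 3) * (amat (tmSeq 2) * (amat (tmSeq 1) * (amat (tmSeq 0) * 1))) := rfl
      rw [e1, tm0, tm1, tm2, tm3]
      ext i k : 1
      fin_cases i <;> fin_cases k <;>
        simp [amat, UEm, Matrix.mul_apply, Fin.sum_univ_two, sp_one, sp_odd, sp_even, se, so]
      · linear_combination ((-X - X^2 : R4)) * h4
      · linear_combination ((-X : R4)) * h4
      · linear_combination ((-X^2 : R4)) * h4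
    · have e2 : Fg (fun n => -tmSeq n) (2^(2*0+2))
          = amat (-tmSeq 3) * (amat (-tmSeq 2) * (amat (-tmSeq 1) * (amat (-tmSeq 0) * 1))) := rfl
      rw [e2, tm0, tm1, tm2, tm3]
      ext i k : 1
      fin_cases i <;> fin_cases k <;>
        simp [amat, VEm, Matrix.mul_apply, Fin.sum_univ_two, sp_one, sp_odd, sp_even, se, so]
      · linear_combination ((-X - X^2 : R4)) * h4
      · linear_combination ((0 : R4)) * h4
      · linear_combination ((-X - X^2 : R4)) * h4
  | j+1 => by
    obtain ⟨hU, hV⟩ := main_even j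
    have hOdd : Fg tmSeq (2^(2*j+3)) = UOm (j+1) := by
      rw [show 2*j+3 = (2*j+2)+1 by ring, Fg_double_t, hU, hV, step_odd1]
    have hOddV : Fg (fun n => -tmSeq n) (2^(2*j+3)) = VOm (j+1) := by
      rw [show 2*j+3 = (2*j+2)+1 by ring, Fg_double_nt, hU, hV, step_odd2]
    constructor
    · rw [show 2*(j+1)+2 = (2*j+3)+1 by ring, Fg_double_t, hOdd, hOddV, step_even1]
    · rw [show 2*(j+1)+2 = (2*j+3)+1 by ring, Fg_double_nt, hOdd, hOddV, step_even2]

lemma Fg_odd (m : ℕ) : Fg tmSeq (2^(2*m+1)) = UOm m ∨ m = 0 := by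
  cases m with
  | zero => exact Or.inr rfl
  | succ j =>
    left
    obtain ⟨hU, hV⟩ := main_even j
    rw [show 2*(j+1)+1 = (2*j+2)+1 by ring, Fg_double_t, hU, hV, step_odd1]

lemma Fg_col : ∀ n : ℕ,
    Fg tmSeq (n+2) 0 1 = X * (Ptm (n+1)).map (Int.castRingHom (ZMod 4)) ∧
    Fg tmSeq (n+2) 1 1 = X * (Ptm n).map (Int.castRingHom (ZMod 4))
  | 0 => by
    have e1 : Fg tmSeq 2 = amat (tmSeq 1) * (amat (tmSeq 0) * 1) := rfl
    rw [e1, tm0, tm1]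
    constructor <;>
      simp [amat, Matrix.mul_apply, Fin.sum_univ_two, Ptm]
  | n+1 => by
    obtain ⟨ih1, ih2⟩ := Fg_col n
    have e1 : Fg tmSeq (n+3) = amat (tmSeq (n+2)) * Fg tmSeq (n+2) := rfl
    have hP : (Ptm (n+2)).map (Int.castRingHom (ZMod 4))
        = (Ptm (n+1)).map (Int.castRingHom (ZMod 4))
          + C ((tmSeq (n+2) : ZMod 4)) * X * (Ptm n).map (Int.castRingHom (ZMod 4)) := by
      rw [show Ptm (n+2) = Ptm (n+1) + C (tmSeq (n+2)) * X * Ptm n from rfl]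
      simp
    constructor
    · show (amat (tmSeq (n+2)) * Fg tmSeq (n+2)) 0 1 = _
      rw [hP]
      simp only [amat, Matrix.mul_apply, Fin.sum_univ_two, Fin.isValue, Matrix.cons_val',
        Matrix.cons_val_zero, Matrix.cons_val_one, Matrix.head_cons, Matrix.head_fin_const,
        Matrix.empty_val', Matrix.cons_val_fin_one, Matrix.of_apply]
      rw [ih1, ih2]
      ring
    · show (amat (tmSeq (n+2)) * Fg tmSeq (n+2)) 1 1 = _
      simp only [amat, Matrix.mul_apply, Fin.sum_univ_two, Fin.isValue, Matrix.cons_val',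
        Matrix.cons_val_zero, Matrix.cons_val_one, Matrix.head_cons, Matrix.head_fin_const,
        Matrix.empty_val', Matrix.cons_val_fin_one, Matrix.of_apply]
      rw [ih1]
      ring

lemma map_Spoly : ∀ n, (Spoly n).map (Int.castRingHom (ZMod 4)) = sp n
  | 0 => by simp [Spoly, sp]
  | n+1 => by
    rw [Spoly, Finset.sum_range_succ, ← Spoly, Polynomial.map_add, map_Spoly n,
      Polynomial.map_pow, Polynomial.map_X, sp]

lemma map_SoPoly : ∀ n, (SoPoly n).map (Int.castRingHom (ZMod 4)) = so n
  | 0 => by simp [SoPoly, so]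
  | n+1 => by
    rw [SoPoly, Finset.sum_range_succ, ← SoPoly, Polynomial.map_add, map_SoPoly n,
      Polynomial.map_pow, Polynomial.map_X, so, xpow_odd]

lemma Fg_entry_odd (m : ℕ) :
    Fg tmSeq (2^(2*m+1)) 1 1 = X + sp (2*m)^2 + 2*X*so m := by
  rcases Fg_odd m with h | h
  · rw [h]
    show X + sp (2*m)^2 + 2*X*so m = _
    rfl
  · subst h
    have e1 : Fg tmSeq 2 = amat (tmSeq 1) * (amat (tmSeq 0) * 1) := rfl
    rw [show (2:ℕ)^(2*0+1) = 2 by norm_num, e1, tm0, tm1]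
    simp [amat, Matrix.mul_apply, Fin.sum_univ_two, sp, so]

/-- x·P(2^(2m+1)−2)(x) ≡ x + S_{2m}(x)² − 2x·S^o_m(x) (mod 4). -/
theorem Ptm_pow_odd_sub_two_mod_four (m : ℕ) :
    ∀ k, (4 : ℤ) ∣ (X * Ptm (2 ^ (2 * m + 1) - 2)
      - (X + Spoly (2 * m) ^ 2 - 2 * X * SoPoly m)).coeff k := by
  have h4 : (4:R4) = 0 := four_eq_zero_s4
  have hn : 2^(2*m+1) - 2 + 2 = 2^(2*m+1) := by
    have : (2:ℕ) ≤ 2^(2*m+1) := by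
      calc (2:ℕ) = 2^1 := rfl
      _ ≤ 2^(2*m+1) := Nat.pow_le_pow_right (by norm_num) (by omega)
    omega
  have hcol := (Fg_col (2^(2*m+1) - 2)).2
  rw [hn] at hcol
  have hent := Fg_entry_odd m
  have hmap : (X * Ptm (2^(2*m+1) - 2)
      - (X + Spoly (2*m)^2 - 2*X*SoPoly m)).map (Int.castRingHom (ZMod 4)) = 0 := by
    simp only [Polynomial.map_sub, Polynomial.map_add, Polynomial.map_mul, Polynomial.map_pow,
      Polynomial.map_X, Polynomial.map_ofNat, map_Spoly, map_SoPoly]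
    have hc : X * (Ptm (2^(2*m+1) - 2)).map (Int.castRingHom (ZMod 4))
        = X + sp (2*m)^2 + 2*X*so m := by rw [← hcol, hent]
    linear_combination hc + (X * so m) * h4
  intro k
  have hco := congrArg (fun p => Polynomial.coeff p k) hmap
  simp only [Polynomial.coeff_map, Polynomial.coeff_zero] at hco
  have : (((X * Ptm (2 ^ (2 * m + 1) - 2)
      - (X + Spoly (2 * m) ^ 2 - 2 * X * SoPoly m)).coeff k : ℤ) : ZMod 4) = 0 := hco
  rwa [ZMod.intCast_zmod_eq_zero_iff_dvd] at this
end
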